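/- arXiv:2401.11310 — 2 statements merged into one kernel-verified Lean document; each statement's English description precedes it below -/
import Mathlib

section
/- Let X be a compact metric space, (x_i) a sequence of points of X, (p_i) a fast growing sequence, and z = z((p_i),(x_i)) the Oxtoby sequence. Suppose L((x_i)) contains at least two points and let x ∈ O̅(z) be a Toeplitz sequence. Then the following are equivalent: (1) x = S^m z for some m ∈ ℤ; (2) there is a conjugacy f from (O̅(z),S) to itself such that f(x) = x^{-1}, where x^{-1} ∈ X^ℤ is defined by x^{-1}(n) = x(−n). -/
/-
The Oxtoby sequence `z` is a palindrome about `-1/2`, so `S^(-(2m+1))` maps `S^m z` to its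
reverse. Conversely, every `y` in the orbit closure has a phase: a point `s` of the odometer
`lim ℤ/p_iℤ` with `y (n + s_i) = z n` at every position `n` filled in the first `i` steps.
A conjugacy `f` with `f y = y⁻¹` yields `g = (reflection about -1/2) ∘ S ∘ f`, continuous on the
orbit closure, with `g (S^k y) = S^(-k) y`. If step `L` had a hole `-2 s_L - e` with `|e|` small
compared with `E_L`, the points `S^(s_L + e - K p_L) y`, `K ∈ ℤ`, would agree on a long window
around `0` while `g` sends them to points whose coordinate `0` runs through all values `x_j`,
`j > L`. As `L((x_i))` has two points, continuity of `g` excludes this for long windows, so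
`-2 s_L` sits in the middle of a long run of step `L`: `2s` is an integer `c`. If `s` were not
an integer, `s_i` would be exactly `(c + p_i)/2` for large `i`, and some position of `y` would be
read off no skeleton, contradicting that `y` is Toeplitz. So `s` is an integer `m` and
`y = S^(-m) z`.
-/

open Filter Topology

section Defs

variable {X : Type*}

/-- The shift by `m`: `(shiftZ m z) n = z (n + m)`, so `shiftZ 1` is the left shift `S`
and `shiftZ m = S^m`. -/
def shiftZ (m : ℤ) (z : ℤ → X) : ℤ → X := fun n => z (n + m)

/-- `Per_p(z)`: the set of positions `n` such that `z m = z n` for all `m ≡ n (mod p)`. -/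
def PerSet (p : ℕ) (z : ℤ → X) : Set ℤ :=
  {n : ℤ | ∀ m : ℤ, (p : ℤ) ∣ m - n → z m = z n}

/-- `Per(z) = ⋃_{p ≥ 1} Per_p(z)`. -/
def PerFull (z : ℤ → X) : Set ℤ := {n : ℤ | ∃ p : ℕ, 1 ≤ p ∧ n ∈ PerSet p z}

/-- A Toeplitz sequence: every position is periodic. -/
def IsToeplitz (z : ℤ → X) : Prop := ∀ n : ℤ, n ∈ PerFull z

/-- A non-periodic sequence: `S^m z ≠ z` for all `m ≠ 0`. -/
def NonPeriodicSeq (z : ℤ → X) : Prop := ∀ m : ℤ, m ≠ 0 → shiftZ m z ≠ z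

/-- `u` and `v` have the same `p`-skeleton. -/
def SamePSkeleton (p : ℕ) (u v : ℤ → X) : Prop :=
  PerSet p u = PerSet p v ∧ ∀ n ∈ PerSet p u, u n = v n

/-- A period structure of a (non-periodic) Toeplitz sequence `z`. -/
def IsPeriodStructure (p : ℕ → ℕ) (z : ℤ → X) : Prop :=
  (∀ i, 1 ≤ p i) ∧
  (∀ i q, 1 ≤ q → q < p i → PerSet q z ≠ PerSet (p i) z) ∧
  (∀ i, p i ∣ p (i + 1)) ∧
  (∀ n : ℤ, ∃ i, n ∈ PerSet (p i) z)

/-- A fast growing sequence of positive integers. -/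
def FastGrowing (p : ℕ → ℕ) : Prop :=
  p 0 = 1 ∧ (∀ i, p i ∣ p (i + 1)) ∧ 3 ≤ p 1 ∧ ∀ i, 3 * p i ≤ p (i + 1)

/-- `oxDefined p i` is the set of positions of the Oxtoby sequence that are filled in
after step `i` of the inductive construction (step `i+1` fills, for each `k ≡ 0` or
`-1 (mod p_{i+1}/p_i)`, the still-empty positions `J(i,k)` of the block
`[k p_i, (k+1) p_i)`). -/
def oxDefined (p : ℕ → ℕ) : ℕ → Set ℤ
  | 0 => ∅
  | i + 1 =>
      oxDefined p i ∪
        {n : ℤ | ∃ k : ℤ,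
          (((p (i + 1) / p i : ℕ) : ℤ) ∣ k ∨ ((p (i + 1) / p i : ℕ) : ℤ) ∣ (k + 1)) ∧
          k * (p i : ℤ) ≤ n ∧ n < (k + 1) * (p i : ℤ) ∧ n ∉ oxDefined p i}

/-- `J(i,k)`: the set of positions in `[k p_i, (k+1) p_i)` still undefined after step `i`. -/
def oxJ (p : ℕ → ℕ) (i : ℕ) (k : ℤ) : Set ℤ :=
  {n : ℤ | k * (p i : ℤ) ≤ n ∧ n < (k + 1) * (p i : ℤ) ∧ n ∉ oxDefined p i}

/-- The Oxtoby sequence `z((p_i),(x_i))`: position `n` receives the value `x_i` where `i`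
is the first step after which `n` is defined. -/
noncomputable def oxtoby (p : ℕ → ℕ) (x : ℕ → X) : ℤ → X :=
  fun n => x (sInf {i : ℕ | n ∈ oxDefined p i})

/-- The reverse of a bi-infinite sequence: `x⁻¹(n) = x(-n)`. -/
def revSeq (z : ℤ → X) : ℤ → X := fun n => z (-n)

/-- `[n0, n1]` is a maximal `p`-periodic block in `x`. -/
def IsMaxPeriodicBlock (p : ℕ) (x : ℤ → X) (n0 n1 : ℤ) : Prop :=
  n0 ≤ n1 ∧ Set.Icc n0 n1 ⊆ PerSet p x ∧
    ∀ n0' n1' : ℤ, n0' ≤ n0 → n1 ≤ n1' → Set.Icc n0' n1' ⊆ PerSet p x →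
      n0' = n0 ∧ n1' = n1

variable [TopologicalSpace X]

/-- The orbit closure of `z` in `X^ℤ` with the product topology. -/
def orbitClosure (z : ℤ → X) : Set (ℤ → X) :=
  closure {y : ℤ → X | ∃ m : ℤ, y = shiftZ m z}

/-- The ω-limit set of a sequence: all limits of convergent subsequences. -/
def omegaLimitSet (x : ℕ → X) : Set X :=
  {a : X | ∃ φ : ℕ → ℕ, StrictMono φ ∧ Tendsto (x ∘ φ) atTop (𝓝 a)}

/-- Two sequences have the same topological type if exactly the same subsequences
converge. -/
def SameTopType {Y : Type*} [TopologicalSpace Y] (x : ℕ → X) (y : ℕ → Y) : Prop :=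
  ∀ φ : ℕ → ℕ, StrictMono φ →
    ((∃ a, Tendsto (x ∘ φ) atTop (𝓝 a)) ↔ (∃ a, Tendsto (y ∘ φ) atTop (𝓝 a)))

/-- `f` is a conjugacy between the shift-invariant sets `A` and `B`: a homeomorphism
from `A` onto `B` commuting with the shift. -/
def IsConjugacy (A B : Set (ℤ → X)) (f : (ℤ → X) → (ℤ → X)) : Prop :=
  Set.MapsTo f A B ∧ ContinuousOn f A ∧
    (∃ g : (ℤ → X) → (ℤ → X), Set.MapsTo g B A ∧ ContinuousOn g B ∧
      (∀ a ∈ A, g (f a) = a) ∧ (∀ b ∈ B, f (g b) = b)) ∧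
    ∀ a ∈ A, f (shiftZ 1 a) = shiftZ 1 (f a)

/-- The `m`-th iterate (for `m : ℤ`) of a self-homeomorphism. -/
def iterZ {Y : Type*} [TopologicalSpace Y] (f : Y ≃ₜ Y) (m : ℤ) (a : Y) : Y :=
  ((f.toEquiv ^ m : Equiv.Perm Y)) a

end Defs

lemma Int.exists_near_mul_iff {a b n : ℤ} (hb : 0 < b) (hab : a ≤ b) :
    (∃ k : ℤ, k * b - a ≤ n ∧ n < k * b + a) ↔ n % b < a ∨ b - a ≤ n % b := by
  have hdiv := Int.mul_ediv_add_emod n b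
  have h0 := Int.emod_nonneg n hb.ne'
  have h1 := Int.emod_lt_of_pos n hb
  constructor
  · rintro ⟨k, hk1, hk2⟩
    rcases le_or_gt (k * b) n with h | h
    · left
      rw [show n = (n - k * b) + b * k by ring, Int.add_mul_emod_self_left,
        Int.emod_eq_of_lt (by omega) (by omega)]
      omega
    · right
      rw [show n = (n - k * b + b) + b * (k - 1) by ring, Int.add_mul_emod_self_left,
        Int.emod_eq_of_lt (by omega) (by omega)]
      omega
  · rintro (h | h)
    · exact ⟨n / b, by nlinarith, by nlinarith⟩
    · exact ⟨n / b + 1, by nlinarith, by nlinarith⟩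

lemma Int.emod_le_of_dvd_sub {a b d : ℤ} (hb : 0 < b) (hd : 0 ≤ d) (h : b ∣ a - d) :
    a % b ≤ d := by
  have h' : b ∣ a % b - d := by
    simpa only [sub_add_sub_cancel] using dvd_add (Int.dvd_emod_sub_self (x := a)) h
  obtain ⟨k, hk⟩ := h'
  have hk1 : k < 1 := by
    by_contra! hk1
    nlinarith [Int.emod_lt_of_pos a hb]
  nlinarith

lemma Int.emod_le_or_neg_emod_le_of_dvd_sub {a b d R : ℤ} (hb : 0 < b) (h : b ∣ a - d)
    (hd : |d| ≤ R) : a % b ≤ R ∨ -a % b ≤ R := by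
  rcases le_or_gt 0 d with hd0 | hd0
  · rw [abs_of_nonneg hd0] at hd
    exact Or.inl ((Int.emod_le_of_dvd_sub hb hd0 h).trans hd)
  · rw [abs_of_neg hd0] at hd
    refine Or.inr ((Int.emod_le_of_dvd_sub hb (neg_nonneg.2 hd0.le) ?_).trans hd)
    rw [neg_sub_neg]
    exact dvd_sub_comm.1 h

lemma Int.two_mul_emod_eq_add_of_lt {a b c : ℤ} (hb : 0 < b) (h : b ∣ 2 * a - c)
    (h1 : |c| < a % b) (h2 : |c| < -a % b) : 2 * (a % b) = c + b := by
  have hc := le_abs_self c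
  have hc' := neg_abs_le c
  have hsum : a % b + -a % b = b := by
    have hndvd : ¬ b ∣ a := fun hd => by rw [Int.emod_eq_zero_of_dvd hd] at h1; omega
    rw [Int.neg_emod, if_neg hndvd, Int.natAbs_of_nonneg hb.le]
    ring
  obtain ⟨k, hk⟩ : b ∣ 2 * (a % b) - c := by
    rw [show 2 * (a % b) - c = 2 * a - c + 2 * (a % b - a) by ring]
    exact dvd_add h (Int.dvd_emod_sub_self.mul_left 2)
  have hk0 : 0 < k := by by_contra! hk0; nlinarith
  have hk2 : k < 2 := by by_contra! hk2; nlinarith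
  obtain rfl : k = 1 := by omega
  linarith

lemma Int.exists_eq_mul_add_mul_of_gcd_dvd {a b d : ℤ} (h : (Int.gcd a b : ℤ) ∣ d) :
    ∃ k K, d = a * k + b * K := by
  obtain ⟨e, rfl⟩ := h
  exact ⟨Int.gcdA a b * e, Int.gcdB a b * e, by rw [Int.gcd_eq_gcd_ab]; ring⟩

lemma Int.exists_forall_ge_eq_of_monotone {a : ℕ → ℤ} (ha : Monotone a) {B : ℤ}
    (hB : ∀ i, a i ≤ B) : ∃ N, ∀ m ≥ N, a m = a N := by
  obtain ⟨_, ⟨N, rfl⟩, hmax⟩ := Int.exists_greatest_of_bdd (P := fun z => ∃ i, a i = z)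
    ⟨B, by rintro _ ⟨i, rfl⟩; exact hB i⟩ ⟨a 0, 0, rfl⟩
  exact ⟨N, fun m hm => le_antisymm (hmax _ ⟨m, rfl⟩) (ha hm)⟩

lemma omegaLimitSet_subset_singleton {X : Type*} [TopologicalSpace X] [T2Space X] {x : ℕ → X}
    {b : X} (h : ∀ᶠ i in atTop, x i = b) : omegaLimitSet x ⊆ {b} := by
  rintro a ⟨φ, hφ, ha⟩
  exact tendsto_nhds_unique ha
    (tendsto_const_nhds.congr' ((hφ.tendsto_atTop.eventually h).mono fun _ hi => hi.symm))

lemma exists_tendsto_of_mem_omegaLimitSet {X : Type*} [TopologicalSpace X] {x : ℕ → X} {a : X}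
    (ha : a ∈ omegaLimitSet x) (N : ℕ → ℕ) :
    ∃ J : ℕ → ℕ, (∀ r, N r < J r) ∧ Tendsto (fun r => x (J r)) atTop (𝓝 a) := by
  obtain ⟨φ, hφ, hx⟩ := ha
  refine ⟨fun r => φ (N r + r + 1), fun r => ?_, hx.comp ?_⟩
  · show N r < φ (N r + r + 1)
    have := hφ.id_le (N r + r + 1)
    simp only [id] at this
    omega
  · exact tendsto_atTop_mono (fun r => show r ≤ N r + r + 1 by omega) tendsto_id

lemma eq_of_continuousOn_of_eventually_eq {ι X : Type*} [TopologicalSpace X] [T2Space X]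
    [CompactSpace X] {O : Set (ι → X)} (hO : IsClosed O) {g : (ι → X) → ι → X}
    (hg : ContinuousOn g O) {A B : ℕ → ι → X} (hA : ∀ r, A r ∈ O) (hB : ∀ r, B r ∈ O)
    (hAB : ∀ t, ∀ᶠ r in atTop, A r t = B r t) {i₀ : ι} {α β : X}
    (hα : Tendsto (fun r => g (A r) i₀) atTop (𝓝 α))
    (hβ : Tendsto (fun r => g (B r) i₀) atTop (𝓝 β)) : α = β := by
  let u : Ultrafilter ℕ := Ultrafilter.of atTop
  have hu : (u : Filter ℕ) ≤ atTop := Ultrafilter.of_le atTop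
  obtain ⟨w, -, hw⟩ := isCompact_univ.ultrafilter_le_nhds (u.map A) (le_principal_iff.2 univ_mem)
  have hAw : Tendsto A u (𝓝 w) := by rwa [Ultrafilter.coe_map] at hw
  have hBw : Tendsto B u (𝓝 w) :=
    tendsto_pi_nhds.2 fun t => (tendsto_pi_nhds.1 hAw t).congr' (hu (hAB t))
  have hwO : w ∈ O := hO.mem_of_tendsto hAw (Eventually.of_forall hA)
  have hlim : ∀ {C : ℕ → ι → X}, (∀ r, C r ∈ O) → Tendsto C u (𝓝 w) →
      Tendsto (fun r => g (C r) i₀) u (𝓝 (g w i₀)) := fun hC hCw =>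
    ((continuous_apply i₀).tendsto _).comp
      ((hg w hwO).tendsto.comp (tendsto_nhdsWithin_iff.2 ⟨hCw, Eventually.of_forall hC⟩))
  exact (tendsto_nhds_unique (hα.mono_left hu) (hlim hA hAw)).trans
    (tendsto_nhds_unique (hlim hB hBw) (hβ.mono_left hu))

section Shift

variable {X : Type*}

lemma shiftZ_shiftZ (a b : ℤ) (w : ℤ → X) : shiftZ a (shiftZ b w) = shiftZ (a + b) w := by
  funext n; simp only [shiftZ, add_assoc]

@[simp] lemma shiftZ_zero (w : ℤ → X) : shiftZ 0 w = w := by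
  funext n; simp [shiftZ]

variable [TopologicalSpace X]

lemma continuous_shiftZ (a : ℤ) : Continuous (shiftZ a : (ℤ → X) → ℤ → X) :=
  continuous_pi fun n => continuous_apply (n + a)

lemma shiftZ_mem_orbitClosure {z w : ℤ → X} (hw : w ∈ orbitClosure z) (a : ℤ) :
    shiftZ a w ∈ orbitClosure z := by
  refine Set.MapsTo.closure ?_ (continuous_shiftZ a) hw
  rintro _ ⟨m, rfl⟩
  exact ⟨a + m, shiftZ_shiftZ a m z⟩

lemma isConjugacy_shiftZ (z : ℤ → X) (k : ℤ) :
    IsConjugacy (orbitClosure z) (orbitClosure z) (shiftZ k) :=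
  ⟨fun _ hw => shiftZ_mem_orbitClosure hw k, (continuous_shiftZ k).continuousOn,
    ⟨shiftZ (-k), fun _ hw => shiftZ_mem_orbitClosure hw (-k), (continuous_shiftZ _).continuousOn,
      fun _ _ => by rw [shiftZ_shiftZ, neg_add_cancel, shiftZ_zero],
      fun _ _ => by rw [shiftZ_shiftZ, add_neg_cancel, shiftZ_zero]⟩,
    fun _ _ => by rw [shiftZ_shiftZ, shiftZ_shiftZ, add_comm]⟩

lemma IsConjugacy.apply_shiftZ {A B : Set (ℤ → X)} (hA : ∀ k, Set.MapsTo (shiftZ k) A A)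
    {f : (ℤ → X) → ℤ → X} (hf : IsConjugacy A B f) {a : ℤ → X} (ha : a ∈ A) (k : ℤ) :
    f (shiftZ k a) = shiftZ k (f a) := by
  induction k using Int.induction_on with
  | zero => simp
  | succ k ih =>
    rw [add_comm, ← shiftZ_shiftZ, hf.2.2.2 _ (hA k ha), ih, shiftZ_shiftZ]
  | pred k ih =>
    have h := hf.2.2.2 _ (hA (-k - 1) ha)
    rw [shiftZ_shiftZ, show (1 : ℤ) + (-k - 1) = -k by ring, ih] at h
    rw [← shiftZ_zero (f _), ← neg_add_cancel (1 : ℤ), ← shiftZ_shiftZ, ← h, shiftZ_shiftZ]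
    congr 1
    ring

end Shift

namespace Oxtoby

variable {p : ℕ → ℕ}

def P (p : ℕ → ℕ) (i : ℕ) : ℤ := p i

lemma P_zero (hp : FastGrowing p) : P p 0 = 1 := by
  simp [P, hp.1]

lemma three_mul_P_le (hp : FastGrowing p) (i : ℕ) : 3 * P p i ≤ P p (i + 1) := by
  unfold P; exact_mod_cast hp.2.2.2 i

lemma P_pos (hp : FastGrowing p) (i : ℕ) : 0 < P p i := by
  induction i with
  | zero => simp [P_zero hp]
  | succ i ih => have := three_mul_P_le hp i; omega

lemma lt_P (hp : FastGrowing p) (i : ℕ) : (i : ℤ) < P p i := by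
  induction i with
  | zero => simp [P_zero hp]
  | succ i ih => have := three_mul_P_le hp i; push_cast; omega

lemma P_dvd_P (hp : FastGrowing p) {i j : ℕ} (h : i ≤ j) : P p i ∣ P p j := by
  induction j, h using Nat.le_induction with
  | base => exact dvd_rfl
  | succ j _ ih => exact ih.trans (by unfold P; exact_mod_cast hp.2.1 j)

lemma P_mono (hp : FastGrowing p) : Monotone (P p) :=
  monotone_nat_of_le_succ fun i => by have := three_mul_P_le hp i; have := P_pos hp i; omega

lemma exists_forall_ge_gcd_eq (hp : FastGrowing p) {d : ℤ} (hd : 0 < d) :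
    ∃ N, ∀ j ≥ N, (Int.gcd d (P p j) : ℤ) = Int.gcd d (P p N) :=
  Int.exists_forall_ge_eq_of_monotone (B := d)
    (fun i j hij => Int.le_of_dvd (by simp [Int.gcd_pos_of_ne_zero_left _ hd.ne'])
      (Int.natCast_dvd_natCast.2 (Int.gcd_dvd_gcd_of_dvd_right _ (P_dvd_P hp hij))))
    (fun i => Int.le_of_dvd hd (Int.gcd_dvd_left _ _))

/-- The run of positions around `0` filled in the first `j` steps is `[-E p j, E p j)`. -/
def E (p : ℕ → ℕ) (j : ℕ) : ℤ := ∑ l ∈ Finset.range j, P p l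

lemma E_succ (j : ℕ) : E p (j + 1) = E p j + P p j := Finset.sum_range_succ _ _

lemma E_nonneg (hp : FastGrowing p) (j : ℕ) : 0 ≤ E p j :=
  Finset.sum_nonneg fun l _ => (P_pos hp l).le

lemma E_mono (hp : FastGrowing p) : Monotone (E p) :=
  monotone_nat_of_le_succ fun j => by rw [E_succ]; have := P_pos hp j; omega

lemma P_le_E_succ (hp : FastGrowing p) (j : ℕ) : P p j ≤ E p (j + 1) := by
  rw [E_succ]; have := E_nonneg hp j; omega

lemma two_mul_E_succ_le (hp : FastGrowing p) (j : ℕ) : 2 * E p (j + 1) ≤ 3 * P p j := by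
  induction j with
  | zero => simp [E, P_zero hp]
  | succ j ih => rw [E_succ]; have := three_mul_P_le hp j; omega

lemma two_mul_E_le (hp : FastGrowing p) (j : ℕ) : 2 * E p j ≤ P p j := by
  cases j with
  | zero => simp [E, P_zero hp]
  | succ j => have := two_mul_E_succ_le hp j; have := three_mul_P_le hp j; omega

lemma E_succ_add_P_lt (hp : FastGrowing p) (j : ℕ) : E p (j + 1) + P p j < P p (j + 1) := by
  have := two_mul_E_succ_le hp j; have := three_mul_P_le hp j; have := P_pos hp j; omega

lemma P_dvd_E_sub_E (hp : FastGrowing p) {l m : ℕ} (h : l ≤ m) : P p l ∣ E p m - E p l := by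
  induction m, h using Nat.le_induction with
  | base => simp
  | succ m hlm ih =>
    rw [E_succ, add_sub_right_comm]
    exact dvd_add ih (P_dvd_P hp hlm)

/-- Step `l + 1` of the construction fills the still-empty positions of the blocks
`[k p_l, (k + 1) p_l)` with `k ≡ 0, -1 (mod p_{l+1}/p_l)`, i.e. those within `p_l` of a
multiple of `p_{l+1}`. -/
def InBlock (p : ℕ → ℕ) (l : ℕ) (n : ℤ) : Prop :=
  n % P p (l + 1) < P p l ∨ P p (l + 1) - P p l ≤ n % P p (l + 1)

def Filled (p : ℕ → ℕ) (i : ℕ) (n : ℤ) : Prop := ∃ l < i, InBlock p l n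

lemma inBlock_congr {l : ℕ} {n n' : ℤ} (h : P p (l + 1) ∣ n' - n) :
    InBlock p l n ↔ InBlock p l n' := by
  have : n % P p (l + 1) = n' % P p (l + 1) := Int.modEq_iff_dvd.2 h
  rw [InBlock, InBlock, this]

lemma filled_congr (hp : FastGrowing p) {i : ℕ} {n n' : ℤ} (h : P p i ∣ n' - n) :
    Filled p i n ↔ Filled p i n' :=
  exists_congr fun _ => and_congr_right fun hl =>
    inBlock_congr ((P_dvd_P hp (Nat.succ_le_of_lt hl)).trans h)

lemma Filled.mono {i i' : ℕ} (h : i ≤ i') {n : ℤ} (hn : Filled p i n) : Filled p i' n :=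
  let ⟨l, hl, hb⟩ := hn; ⟨l, lt_of_lt_of_le hl h, hb⟩

lemma filled_succ_iff {i : ℕ} {n : ℤ} : Filled p (i + 1) n ↔ Filled p i n ∨ InBlock p i n := by
  constructor
  · rintro ⟨l, hl, hb⟩
    rcases Nat.lt_succ_iff_lt_or_eq.1 hl with hl | rfl
    exacts [Or.inl ⟨l, hl, hb⟩, Or.inr hb]
  · rintro (⟨l, hl, hb⟩ | hb)
    exacts [⟨l, hl.trans (Nat.lt_succ_self i), hb⟩, ⟨i, Nat.lt_succ_self i, hb⟩]

lemma inBlock_iff (hp : FastGrowing p) {l : ℕ} {n : ℤ} :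
    InBlock p l n ↔ ∃ k : ℤ, k * P p (l + 1) - P p l ≤ n ∧ n < k * P p (l + 1) + P p l := by
  have := three_mul_P_le hp l
  have := P_pos hp l
  rw [Int.exists_near_mul_iff (P_pos hp _) (by omega), InBlock]

lemma inBlock_add_of_dvd (hp : FastGrowing p) {l : ℕ} {v w : ℤ} (hv : P p (l + 1) ∣ v)
    (h1 : -P p l ≤ w) (h2 : w < P p l) : InBlock p l (v + w) := by
  obtain ⟨k, rfl⟩ := hv
  exact (inBlock_iff hp).2 ⟨k, by linarith, by linarith⟩

lemma inBlock_neg_one_sub_iff (hp : FastGrowing p) {l : ℕ} {n : ℤ} :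
    InBlock p l (-1 - n) ↔ InBlock p l n := by
  rw [inBlock_iff hp, inBlock_iff hp]
  constructor <;> rintro ⟨k, h1, h2⟩ <;> exact ⟨-k, by linarith, by linarith⟩

lemma filled_neg_one_sub_iff (hp : FastGrowing p) {i : ℕ} {n : ℤ} :
    Filled p i (-1 - n) ↔ Filled p i n :=
  exists_congr fun _ => and_congr_right fun _ => inBlock_neg_one_sub_iff hp

lemma filled_succ_of_abs_lt (hp : FastGrowing p) {j : ℕ} {u : ℤ} (h1 : -P p j ≤ u)
    (h2 : u < P p j) : Filled p (j + 1) u :=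
  ⟨j, Nat.lt_succ_self j, by simpa using inBlock_add_of_dvd hp (dvd_zero _) h1 h2⟩

lemma exists_filled (hp : FastGrowing p) (n : ℤ) : ∃ i, Filled p i n := by
  have := lt_P hp n.natAbs
  exact ⟨_, filled_succ_of_abs_lt hp (j := n.natAbs) (by omega) (by omega)⟩

lemma exists_block_iff_inBlock (hp : FastGrowing p) (i : ℕ) (n : ℤ) :
    (∃ k : ℤ, (((p (i + 1) / p i : ℕ) : ℤ) ∣ k ∨ ((p (i + 1) / p i : ℕ) : ℤ) ∣ (k + 1)) ∧
      k * (p i : ℤ) ≤ n ∧ n < (k + 1) * (p i : ℤ)) ↔ InBlock p i n := by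
  set Q : ℤ := ((p (i + 1) / p i : ℕ) : ℤ)
  have hQ : P p (i + 1) = Q * P p i := by
    unfold Q P; exact_mod_cast (Nat.div_mul_cancel (hp.2.1 i)).symm
  rw [inBlock_iff hp, hQ]
  change (∃ k : ℤ, (Q ∣ k ∨ Q ∣ k + 1) ∧ k * P p i ≤ n ∧ n < (k + 1) * P p i) ↔ _
  constructor
  · rintro ⟨k, ⟨m, rfl⟩ | ⟨m, hm⟩, h1, h2⟩
    · exact ⟨m, by linarith, by linarith⟩
    · obtain rfl : k = Q * m - 1 := by omega
      exact ⟨m, by linarith, by linarith⟩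
  · rintro ⟨K, h1, h2⟩
    rcases lt_or_ge n (K * (Q * P p i)) with h | h
    · exact ⟨K * Q - 1, Or.inr ⟨K, by ring⟩, by linarith, by linarith⟩
    · exact ⟨K * Q, Or.inl ⟨K, by ring⟩, by linarith, by linarith⟩

lemma mem_oxDefined_iff (hp : FastGrowing p) (i : ℕ) (n : ℤ) :
    n ∈ oxDefined p i ↔ Filled p i n := by
  induction i with
  | zero => simp [oxDefined, Filled]
  | succ i ih =>
    simp only [oxDefined, Set.mem_union, Set.mem_ofPred_eq]
    rw [filled_succ_iff, ← ih, ← exists_block_iff_inBlock hp]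
    constructor
    · rintro (h | ⟨k, hk, h1, h2, -⟩)
      exacts [Or.inl h, Or.inr ⟨k, hk, h1, h2⟩]
    · rintro (h | ⟨k, hk, h1, h2⟩)
      · exact Or.inl h
      · by_cases hD : n ∈ oxDefined p i
        exacts [Or.inl hD, Or.inr ⟨k, hk, h1, h2, hD⟩]

lemma not_inBlock_E (hp : FastGrowing p) {l m : ℕ} (h : l < m) : ¬ InBlock p l (E p m) := by
  rw [← inBlock_congr (P_dvd_E_sub_E hp h), InBlock,
    Int.emod_eq_of_lt (E_nonneg hp _) (by have := E_succ_add_P_lt hp l; have := P_pos hp l; omega)]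
  have := P_le_E_succ hp l
  have := E_succ_add_P_lt hp l
  omega

lemma not_filled_add_E (hp : FastGrowing p) {m : ℕ} {v : ℤ} (hv : P p m ∣ v) :
    ¬ Filled p m (v + E p m) := by
  rintro ⟨l, hl, hb⟩
  refine not_inBlock_E hp hl ((inBlock_congr ?_).2 hb)
  rw [add_sub_cancel_right]
  exact (P_dvd_P hp hl).trans hv

lemma not_filled_sub_one_sub_E (hp : FastGrowing p) {m : ℕ} {v : ℤ} (hv : P p m ∣ v) :
    ¬ Filled p m (v - 1 - E p m) := by
  rw [show v - 1 - E p m = -1 - (-v + E p m) by ring, filled_neg_one_sub_iff hp]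
  exact not_filled_add_E hp (dvd_neg.2 hv)

lemma filled_add_of_dvd (hp : FastGrowing p) {j : ℕ} {v w : ℤ} (hv : P p j ∣ v)
    (h1 : -E p j ≤ w) (h2 : w < E p j) : Filled p j (v + w) := by
  induction j generalizing v w with
  | zero => simp [E] at h1 h2; omega
  | succ j ih =>
    rw [E_succ] at h1 h2
    have hv' : P p j ∣ v := (P_dvd_P hp (Nat.le_succ j)).trans hv
    rcases lt_or_ge w (-P p j) with hw | hw
    · have := ih (dvd_sub hv' dvd_rfl) (w := w + P p j) (by omega) (by have := P_pos hp j; omega)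
      rw [sub_add_add_cancel] at this
      exact this.mono (Nat.le_succ j)
    · rcases lt_or_ge w (P p j) with hw' | hw'
      · exact filled_succ_iff.2 (Or.inr (inBlock_add_of_dvd hp hv hw hw'))
      · have := ih (dvd_add hv' dvd_rfl) (w := w - P p j) (by have := E_nonneg hp j; omega)
          (by omega)
        rw [add_add_sub_cancel] at this
        exact this.mono (Nat.le_succ j)

lemma exists_run_of_forall_filled (hp : FastGrowing p) {i : ℕ} {a b : ℤ} (hab : a ≤ b)
    (h : ∀ n, a ≤ n → n ≤ b → Filled p i n) :
    ∃ l < i, ∃ v, P p (l + 1) ∣ v ∧ v - E p (l + 1) ≤ a ∧ b < v + E p (l + 1) := by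
  induction i with
  | zero => obtain ⟨l, hl, -⟩ := h a le_rfl hab; omega
  | succ i ih =>
    by_cases hall : ∀ n, a ≤ n → n ≤ b → Filled p i n
    · obtain ⟨l, hl, hrun⟩ := ih hall
      exact ⟨l, hl.trans (Nat.lt_succ_self i), hrun⟩
    push Not at hall
    obtain ⟨w, hw1, hw2, hw⟩ := hall
    have hb : InBlock p i w := (filled_succ_iff.1 (h w hw1 hw2)).resolve_left hw
    obtain ⟨k, hk1, hk2⟩ := (inBlock_iff hp).1 hb
    have hv : P p (i + 1) ∣ k * P p (i + 1) := dvd_mul_left _ _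
    have := P_le_E_succ hp i
    refine ⟨i, Nat.lt_succ_self i, k * P p (i + 1), hv, ?_, ?_⟩
    · by_contra! hlt
      exact not_filled_sub_one_sub_E hp hv (h _ (by omega) (by omega))
    · by_contra! hle
      exact not_filled_add_E hp hv (h _ (by omega) (by omega))

lemma exists_dvd_abs_sub_le_of_forall_filled (hp : FastGrowing p) {l : ℕ} {r a : ℤ}
    (hr : r < P p l) (h : ∀ e, |e| + r < E p (l + 1) → Filled p (l + 1) (a - e)) :
    ∃ v, P p (l + 1) ∣ v ∧ |a - v| ≤ r + 1 := by
  have hE := P_le_E_succ hp l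
  obtain ⟨l', hl', v, hv, h1, h2⟩ := exists_run_of_forall_filled hp
    (a := a - (E p (l + 1) - 1 - r)) (b := a + (E p (l + 1) - 1 - r)) (by omega)
    fun n hn1 hn2 => by
      have := h (a - n) (by
        have := abs_le.2 (⟨by omega, by omega⟩ :
          -(E p (l + 1) - 1 - r) ≤ a - n ∧ a - n ≤ E p (l + 1) - 1 - r)
        omega)
      rwa [sub_sub_cancel] at this
  -- the interval is longer than every run of the earlier steps
  obtain rfl : l' = l := by
    by_contra hne
    have := E_mono hp (show l' + 1 ≤ l by omega)
    have := E_succ (p := p) l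
    omega
  exact ⟨v, hv, abs_le.2 ⟨by omega, by omega⟩⟩

lemma not_filled_succ_add_P (hp : FastGrowing p) {i : ℕ} {u : ℤ} (hu : ¬ Filled p i u)
    (h0 : 0 ≤ u) (h1 : u < P p i) : ¬ Filled p (i + 1) (u + P p i) := by
  rw [filled_succ_iff, ← filled_congr hp (show P p i ∣ u + P p i - u by simp), InBlock,
    Int.emod_eq_of_lt (by omega) (by have := three_mul_P_le hp i; omega)]
  have := three_mul_P_le hp i
  exact fun h => h.elim hu fun h' => by omega

lemma exists_not_filled_of_le (hp : FastGrowing p) {i L : ℕ} (h : i ≤ L) {u : ℤ}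
    (hu : ¬ Filled p i u) : ∃ u', ¬ Filled p L u' ∧ 0 ≤ u' ∧ u' < P p L ∧ P p i ∣ u' - u := by
  induction L, h using Nat.le_induction with
  | base =>
    refine ⟨u % P p i, ?_, Int.emod_nonneg _ (P_pos hp i).ne', Int.emod_lt_of_pos _ (P_pos hp i),
      Int.dvd_emod_sub_self⟩
    rwa [← filled_congr hp Int.dvd_emod_sub_self]
  | succ L hiL ih =>
    obtain ⟨u', hu', h0, h1, hd⟩ := ih
    refine ⟨u' + P p L, not_filled_succ_add_P hp hu' h0 h1, by omega,
      by have := three_mul_P_le hp L; omega, ?_⟩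
    rw [add_sub_right_comm]
    exact dvd_add hd (P_dvd_P hp hiL)

section Odometer

variable {s : ℕ → ℤ}

/-- A point of the odometer `lim ℤ/p_iℤ`, given by representatives `s i` of its coordinates. -/
def IsCompatible (p : ℕ → ℕ) (s : ℕ → ℤ) : Prop := ∀ i j, i ≤ j → P p i ∣ s j - s i

lemma IsCompatible.neg (hs : IsCompatible p s) : IsCompatible p fun i => -s i :=
  fun i j hij => by rw [neg_sub_neg]; exact dvd_sub_comm.1 (hs i j hij)

lemma IsCompatible.const_mul (hs : IsCompatible p s) (k : ℤ) : IsCompatible p fun i => k * s i :=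
  fun i j hij => by rw [← mul_sub]; exact (hs i j hij).mul_left k

lemma IsCompatible.emod_mono (hp : FastGrowing p) (hs : IsCompatible p s) :
    Monotone fun i => s i % P p i := by
  intro i j hij
  change s i % P p i ≤ s j % P p j
  rw [show s i % P p i = s j % P p j % P p i by
    rw [Int.emod_emod_of_dvd _ (P_dvd_P hp hij)]; exact Int.modEq_iff_dvd.2 (hs i j hij)]
  exact Int.emod_le_of_dvd_sub (P_pos hp i) (Int.emod_nonneg _ (P_pos hp j).ne') (by simp)

lemma IsCompatible.exists_dvd_sub_of_frequently_emod_le (hp : FastGrowing p)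
    (hs : IsCompatible p s) {r : ℤ} (h : ∃ᶠ i in atTop, s i % P p i ≤ r) :
    ∃ c, ∀ i, P p i ∣ s i - c := by
  have hmono := hs.emod_mono hp
  obtain ⟨N, hN⟩ := Int.exists_forall_ge_eq_of_monotone hmono (B := r) fun i => by
    obtain ⟨j, hij, hj⟩ := frequently_atTop.1 h i
    exact (hmono hij).trans hj
  refine ⟨s N % P p N, fun i => ?_⟩
  have h1 : P p i ∣ s (max i N) - s i := hs i _ (le_max_left _ _)
  have h2 : P p (max i N) ∣ s (max i N) - s N % P p N := by
    rw [← hN _ (le_max_right _ _)]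
    exact Int.dvd_self_sub_emod
  have := dvd_sub ((P_dvd_P hp (le_max_left i N)).trans h2) h1
  rwa [sub_sub_sub_cancel_left] at this

lemma IsCompatible.exists_dvd_sub_of_frequently_near (hp : FastGrowing p)
    (hs : IsCompatible p s) {r : ℤ} (h : ∃ᶠ i in atTop, s i % P p i ≤ r ∨ -s i % P p i ≤ r) :
    ∃ c, ∀ i, P p i ∣ s i - c := by
  rcases frequently_or_distrib.1 h with h | h
  · exact hs.exists_dvd_sub_of_frequently_emod_le hp h
  · obtain ⟨c, hc⟩ := hs.neg.exists_dvd_sub_of_frequently_emod_le hp h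
    refine ⟨-c, fun i => ?_⟩
    rw [show s i - -c = -(-s i - c) by ring]
    exact (hc i).neg_right

/-- Every sequence of integers has a cluster point in the odometer `lim ℤ/p_iℤ`. -/
lemma exists_isCompatible_forall_exists_dvd (hp : FastGrowing p) (a : ℕ → ℤ) :
    ∃ s, IsCompatible p s ∧ ∀ i, ∃ r ≥ i, P p i ∣ a r - s i := by
  let u : Ultrafilter ℕ := Ultrafilter.of atTop
  have hu : (u : Filter ℕ) ≤ atTop := Ultrafilter.of_le atTop
  have hres : ∀ i, ∃ ρ, ∀ᶠ r in (u : Filter ℕ), a r % P p i = ρ := by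
    intro i
    obtain ⟨ρ, -, hρ⟩ := (Ultrafilter.eventually_exists_mem_iff (P := fun ρ r => a r % P p i = ρ)
      (Set.finite_Ico 0 (P p i))).1
      (Eventually.of_forall fun r => ⟨a r % P p i,
        ⟨Int.emod_nonneg _ (P_pos hp i).ne', Int.emod_lt_of_pos _ (P_pos hp i)⟩, rfl⟩)
    exact ⟨ρ, hρ⟩
  choose s hs using hres
  refine ⟨s, fun i j hij => ?_, fun i => ?_⟩
  · obtain ⟨r, hri, hrj⟩ := ((hs i).and (hs j)).exists
    have := dvd_sub ((P_dvd_P hp hij).trans (Int.dvd_emod_sub_self (x := a r) (m := P p j)))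
      (Int.dvd_emod_sub_self (x := a r) (m := P p i))
    rwa [sub_sub_sub_cancel_right, hri, hrj] at this
  · obtain ⟨r, hri, hr⟩ := ((hs i).and (hu (eventually_ge_atTop i))).exists
    exact ⟨r, hr, hri ▸ Int.dvd_self_sub_emod⟩

lemma not_filled_sub_of_middle (hp : FastGrowing p) (hs : IsCompatible p s) {c : ℤ} {N : ℕ}
    (hmid : ∀ i ≥ N, 2 * (s i % P p i) = c + P p i) (i : ℕ) :
    ¬ Filled p i (E p N + s N % P p N - P p N - s i) := by
  rintro ⟨l, hl, hb⟩
  rcases lt_or_ge l N with hlN | hlN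
  -- modulo `p_{l+1}` the position is `E p N`, a hole of all steps before `N`
  · refine not_inBlock_E hp hlN ((inBlock_congr ?_).1 hb)
    rw [show E p N - (E p N + s N % P p N - P p N - s i) =
      -(s N % P p N - s N) - (s N - s (l + 1)) + (s i - s (l + 1)) + P p N by ring]
    exact dvd_add (dvd_add (dvd_sub ((P_dvd_P hp hlN).trans Int.dvd_emod_sub_self).neg_right
      (hs _ _ hlN)) (hs _ _ hl)) (P_dvd_P hp hlN)
  -- modulo `p_{l+1}` the position lies midway between two blocks of step `l + 1`
  · set val := E p N + s N % P p N - P p N - s (l + 1) % P p (l + 1) with hval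
    have hb' : InBlock p l val := by
      refine (inBlock_congr ?_).1 hb
      rw [show val - (E p N + s N % P p N - P p N - s i) =
        -(s (l + 1) % P p (l + 1) - s (l + 1)) + (s i - s (l + 1)) by ring]
      exact dvd_add Int.dvd_emod_sub_self.neg_right (hs _ _ hl)
    have := hmid N le_rfl
    have := hmid (l + 1) (by omega)
    have := two_mul_E_le hp N
    have := three_mul_P_le hp l
    have := P_mono hp hlN
    have := P_pos hp N
    have := E_nonneg hp N
    have hmod : val % P p (l + 1) = val + P p (l + 1) := by
      have := Int.add_mul_emod_self_left val (P p (l + 1)) 1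
      rwa [mul_one, Int.emod_eq_of_lt (a := val + P p (l + 1)) (by omega) (by omega),
        eq_comm] at this
    rw [InBlock, hmod] at hb'
    omega

end Odometer

section Sequence

variable {X : Type*} {x : ℕ → X}

lemma oxtoby_apply (hp : FastGrowing p) (x : ℕ → X) (n : ℤ) :
    oxtoby p x n = x (sInf {i | Filled p i n}) := by
  simp only [oxtoby, mem_oxDefined_iff hp]

lemma oxtoby_eq_of_filled_succ (hp : FastGrowing p) (x : ℕ → X) {j : ℕ} {n : ℤ}
    (h1 : Filled p (j + 1) n) (h2 : ¬ Filled p j n) : oxtoby p x n = x (j + 1) := by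
  rw [oxtoby_apply hp]
  congr 1
  have hmin : sInf {i | Filled p i n} ∈ {i | Filled p i n} := Nat.sInf_mem ⟨j + 1, h1⟩
  exact le_antisymm (Nat.sInf_le h1)
    (Nat.succ_le_of_lt (lt_of_not_ge fun hle => h2 (Filled.mono hle hmin)))

lemma oxtoby_eq_of_filled (hp : FastGrowing p) (x : ℕ → X) {i : ℕ} {n n' : ℤ}
    (hn : Filled p i n) (hd : P p i ∣ n' - n) : oxtoby p x n' = oxtoby p x n := by
  rw [oxtoby_apply hp, oxtoby_apply hp]
  congr 2
  ext k
  rcases le_or_gt k i with hk | hk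
  · exact (filled_congr hp ((P_dvd_P hp hk).trans hd)).symm
  · exact iff_of_true (((filled_congr hp hd).1 hn).mono hk.le) (hn.mono hk.le)

lemma oxtoby_neg_one_sub (hp : FastGrowing p) (x : ℕ → X) (n : ℤ) :
    oxtoby p x (-1 - n) = oxtoby p x n := by
  simp only [oxtoby_apply hp, filled_neg_one_sub_iff hp]

def mirror (w : ℤ → X) : ℤ → X := fun n => w (-1 - n)

lemma mirror_mirror (w : ℤ → X) : mirror (mirror w) = w := by
  funext n; simp [mirror]

lemma mirror_shiftZ (a : ℤ) (w : ℤ → X) : mirror (shiftZ a w) = shiftZ (-a) (mirror w) := by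
  funext n; simp only [mirror, shiftZ]; congr 1; ring

lemma revSeq_eq_shiftZ_mirror (w : ℤ → X) : revSeq w = shiftZ (-1) (mirror w) := by
  funext n; simp only [revSeq, shiftZ, mirror]; congr 1; ring

lemma shiftZ_shiftZ_oxtoby_eq_revSeq (hp : FastGrowing p) (x : ℕ → X) (m : ℤ) :
    shiftZ (-(2 * m + 1)) (shiftZ m (oxtoby p x)) = revSeq (shiftZ m (oxtoby p x)) := by
  funext n
  simp only [shiftZ, revSeq]
  rw [← oxtoby_neg_one_sub hp x]
  congr 1
  ring

def IsPhase (p : ℕ → ℕ) (x : ℕ → X) (w : ℤ → X) (i : ℕ) (a : ℤ) : Prop :=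
  ∀ n, Filled p i n → w (n + a) = oxtoby p x n

variable {w y : ℤ → X} {i : ℕ} {a : ℤ} {s : ℕ → ℤ}

lemma IsPhase.mono {i' : ℕ} (h : IsPhase p x w i' a) (hi : i ≤ i') : IsPhase p x w i a :=
  fun n hn => h n (hn.mono hi)

lemma IsPhase.congr (hp : FastGrowing p) (h : IsPhase p x w i a) {a' : ℤ} (hd : P p i ∣ a' - a) :
    IsPhase p x w i a' := by
  intro n hn
  have hn' : Filled p i (n + (a' - a)) := (filled_congr hp (by simpa using hd)).1 hn
  rw [show n + a' = n + (a' - a) + a by ring, h _ hn',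
    oxtoby_eq_of_filled hp x hn (by simpa using hd)]

lemma IsPhase.apply_add_mul (hp : FastGrowing p) (h : IsPhase p x w i a) {n : ℤ}
    (hn : Filled p i n) (K : ℤ) : w (n + a + K * P p i) = w (n + a) := by
  rw [add_assoc, h.congr hp (a' := a + K * P p i) (by simp) n hn, h n hn]

lemma IsPhase.apply_add_add_mul (hp : FastGrowing p) (h : IsPhase p x w i a) {v : ℤ}
    (h1 : -E p i ≤ v) (h2 : v < E p i) (K : ℤ) : w (a + v + K * P p i) = w (a + v) := by
  have hv : Filled p i v := by simpa using filled_add_of_dvd hp (dvd_zero _) h1 h2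
  rw [add_comm a v]
  exact h.apply_add_mul hp hv K

lemma eq_shiftZ_of_dvd_sub (hp : FastGrowing p) (hph : ∀ i, IsPhase p x y i (s i)) {m : ℤ}
    (hm : ∀ i, P p i ∣ s i - m) :
    y = shiftZ (-m) (oxtoby p x) := by
  funext k
  obtain ⟨i, hi⟩ := exists_filled hp (k - m)
  have := (hph i).congr hp (dvd_sub_comm.1 (hm i)) (k - m) hi
  rw [sub_add_cancel] at this
  rw [this, shiftZ, sub_eq_add_neg]

lemma exists_apply_add_mul_eq (hp : FastGrowing p) (hs : IsCompatible p s)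
    (hph : ∀ i, IsPhase p x y i (s i)) {L : ℕ} {h : ℤ} (hh : ¬ Filled p L h) {j : ℕ}
    (hj : L < j) {m : ℤ} (hm : P p L ∣ m - (h + s L)) : ∃ K, y (m + K * P p L) = x j := by
  obtain ⟨j, rfl⟩ : ∃ j', j = j' + 1 := ⟨j - 1, by omega⟩
  obtain ⟨u, hu, hu0, hu1, hd⟩ := exists_not_filled_of_le hp (Nat.le_of_lt_succ hj) hh
  have hfill : Filled p (j + 1) u := filled_succ_of_abs_lt hp (by omega) hu1
  obtain ⟨K, hK⟩ : P p L ∣ u + s (j + 1) - m := by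
    rw [show u + s (j + 1) - m = (u - h) + (s (j + 1) - s L) - (m - (h + s L)) by ring]
    exact dvd_sub (dvd_add hd (hs _ _ (by omega))) hm
  refine ⟨K, ?_⟩
  rw [show m + K * P p L = u + s (j + 1) by linarith, hph (j + 1) u hfill,
    oxtoby_eq_of_filled_succ hp x hfill hu]

variable [TopologicalSpace X]

lemma continuous_mirror : Continuous (mirror : (ℤ → X) → ℤ → X) :=
  continuous_pi fun n => continuous_apply (-1 - n)

lemma exists_continuousOn_shiftZ_neg {z : ℤ → X} (hy : y ∈ orbitClosure z)
    {f : (ℤ → X) → ℤ → X} (hf : IsConjugacy (orbitClosure z) (orbitClosure z) f)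
    (hfy : f y = revSeq y) :
    ∃ g : (ℤ → X) → ℤ → X, ContinuousOn g (orbitClosure z) ∧
      ∀ k, g (shiftZ k y) = shiftZ (-k) y := by
  refine ⟨fun w => mirror (shiftZ 1 (f w)),
    (continuous_mirror.comp (continuous_shiftZ 1)).comp_continuousOn hf.2.1, fun k => ?_⟩
  change mirror (shiftZ 1 (f (shiftZ k y))) = _
  rw [hf.apply_shiftZ (fun k _ hw => shiftZ_mem_orbitClosure hw k) hy, hfy,
    revSeq_eq_shiftZ_mirror, shiftZ_shiftZ, shiftZ_shiftZ, mirror_shiftZ, mirror_mirror]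
  congr 1
  ring

variable [T2Space X]

lemma exists_phase (hp : FastGrowing p) (hw : w ∈ orbitClosure (oxtoby p x))
    (i : ℕ) : ∃ a, IsPhase p x w i a := by
  have hclosed : IsClosed (⋃ a ∈ Finset.Ico 0 (P p i), {w : ℤ → X | IsPhase p x w i a}) := by
    refine isClosed_biUnion_finset fun a _ => ?_
    simp only [IsPhase, Set.ofPred_forall]
    exact isClosed_iInter fun n => isClosed_iInter fun _ =>
      isClosed_eq (continuous_apply _) continuous_const
  have horbit : {w : ℤ → X | ∃ m, w = shiftZ m (oxtoby p x)} ⊆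
      ⋃ a ∈ Finset.Ico 0 (P p i), {w : ℤ → X | IsPhase p x w i a} := by
    rintro _ ⟨m, rfl⟩
    refine Set.mem_biUnion (x := -m % P p i) (Finset.mem_Ico.2
      ⟨Int.emod_nonneg _ (P_pos hp i).ne', Int.emod_lt_of_pos _ (P_pos hp i)⟩) fun n hn => ?_
    change oxtoby p x (n + -m % P p i + m) = _
    refine oxtoby_eq_of_filled hp x hn ?_
    rw [show n + -m % P p i + m - n = -m % P p i - -m by ring]
    exact Int.dvd_emod_sub_self
  obtain ⟨a, -, ha⟩ := Set.mem_iUnion₂.1 (closure_minimal horbit hclosed hw)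
  exact ⟨a, ha⟩

lemma exists_isCompatible_isPhase (hp : FastGrowing p) (hy : y ∈ orbitClosure (oxtoby p x)) :
    ∃ s, IsCompatible p s ∧ ∀ i, IsPhase p x y i (s i) := by
  choose a ha using exists_phase hp hy
  obtain ⟨s, hs, hsa⟩ := exists_isCompatible_forall_exists_dvd hp a
  refine ⟨s, hs, fun i => ?_⟩
  obtain ⟨r, hri, hd⟩ := hsa i
  exact ((ha r).mono hri).congr hp (dvd_sub_comm.1 hd)

lemma exists_filled_sub_of_isToeplitz (hp : FastGrowing p) (hL : (omegaLimitSet x).Nontrivial)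
    (hT : IsToeplitz y) (hs : IsCompatible p s) (hph : ∀ i, IsPhase p x y i (s i)) (t : ℤ) :
    ∃ i, Filled p i (t - s i) := by
  by_contra! hhole
  -- then `y t`, repeated along `t + per ℤ`, meets the value `x (j + 1)` of every late step `j`
  obtain ⟨per, hper, hperiod⟩ := hT t
  obtain ⟨N, hN⟩ := exists_forall_ge_gcd_eq hp (d := per) (by omega)
  have hval : ∀ j ≥ N, x (j + 1) = y t := by
    intro j hj
    set u := (t - s j) % P p j
    have hu : ¬ Filled p j u := fun h => hhole j ((filled_congr hp Int.dvd_self_sub_emod).1 h)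
    have hu' : Filled p (j + 1) u := filled_succ_of_abs_lt hp
      (by have := Int.emod_nonneg (t - s j) (P_pos hp j).ne'; have := P_pos hp j; omega)
      (Int.emod_lt_of_pos _ (P_pos hp j))
    have hg : (Int.gcd per (P p (j + 1)) : ℤ) ∣ u + s (j + 1) - t := by
      have hgj : (Int.gcd per (P p (j + 1)) : ℤ) = Int.gcd per (P p j) :=
        (hN (j + 1) (by omega)).trans (hN j hj).symm
      rw [hgj, show u + s (j + 1) - t = (u - (t - s j)) + (s (j + 1) - s j) by ring]
      exact (Int.gcd_dvd_right _ _).trans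
        (dvd_add Int.dvd_emod_sub_self (hs j (j + 1) (Nat.le_succ j)))
    obtain ⟨k, K, hkK⟩ := Int.exists_eq_mul_add_mul_of_gcd_dvd hg
    have hfill : Filled p (j + 1) (u - K * P p (j + 1)) :=
      (filled_congr hp ⟨-K, by ring⟩).1 hu'
    calc x (j + 1) = oxtoby p x u := (oxtoby_eq_of_filled_succ hp x hu' hu).symm
      _ = oxtoby p x (u - K * P p (j + 1)) := (oxtoby_eq_of_filled hp x hu' ⟨-K, by ring⟩).symm
      _ = y (u - K * P p (j + 1) + s (j + 1)) := (hph (j + 1) _ hfill).symm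
      _ = y (t + per * k) := by congr 1; linarith
      _ = y t := hperiod _ ⟨k, by ring⟩
  refine hL.not_subset_singleton (omegaLimitSet_subset_singleton (b := y t) ?_)
  filter_upwards [eventually_ge_atTop (N + 1)] with i hi
  obtain ⟨j, rfl⟩ : ∃ j, i = j + 1 := ⟨i - 1, by omega⟩
  exact hval _ (by omega)

/-- Otherwise shifts of `y` agreeing on longer and longer windows would be sent by `g` to points
whose coordinate `0` approaches two different points of `L((x_i))`. -/
lemma exists_forall_filled_neg_two_mul_sub [CompactSpace X] (hp : FastGrowing p)
    (hL : (omegaLimitSet x).Nontrivial) (hy : y ∈ orbitClosure (oxtoby p x))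
    (hs : IsCompatible p s) (hph : ∀ i, IsPhase p x y i (s i)) {g : (ℤ → X) → ℤ → X}
    (hg : ContinuousOn g (orbitClosure (oxtoby p x))) (hgy : ∀ k, g (shiftZ k y) = shiftZ (-k) y) :
    ∃ r : ℕ, ∀ L e, |e| + r < E p L → Filled p L (-(2 * s L) - e) := by
  by_contra! h
  choose L e he hhole using h
  obtain ⟨α, hα, β, hβ, hαβ⟩ := hL
  have hwin : ∀ (r : ℕ) (K t : ℤ), |t| ≤ r →
      shiftZ (s (L r) + e r - K * P p (L r)) y t = y (s (L r) + (e r + t)) := by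
    intro r K t ht
    have := he r
    have := abs_le.1 ht
    have := le_abs_self (e r)
    have := neg_abs_le (e r)
    rw [shiftZ, ← (hph (L r)).apply_add_add_mul hp (v := e r + t) (by omega) (by omega) (-K)]
    congr 1
    ring
  have hesc : ∀ r j, L r < j → ∃ K, y (-(s (L r) + e r) + K * P p (L r)) = x j :=
    fun r j hj => exists_apply_add_mul_eq hp hs hph (hhole r) hj
      (by rw [show -(s (L r) + e r) - (-(2 * s (L r)) - e r + s (L r)) = 0 by ring]
          exact dvd_zero _)
  obtain ⟨JA, hJA, hα'⟩ := exists_tendsto_of_mem_omegaLimitSet hα L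
  obtain ⟨JB, hJB, hβ'⟩ := exists_tendsto_of_mem_omegaLimitSet hβ L
  choose KA hKA using fun r => hesc r (JA r) (hJA r)
  choose KB hKB using fun r => hesc r (JB r) (hJB r)
  have hg0 : ∀ (r : ℕ) (K : ℤ), g (shiftZ (s (L r) + e r - K * P p (L r)) y) 0 =
      y (-(s (L r) + e r) + K * P p (L r)) := fun r K => by
    rw [hgy, shiftZ]
    congr 1
    ring
  refine hαβ (eq_of_continuousOn_of_eventually_eq isClosed_closure hg
    (A := fun r => shiftZ (s (L r) + e r - KA r * P p (L r)) y)
    (B := fun r => shiftZ (s (L r) + e r - KB r * P p (L r)) y)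
    (fun r => shiftZ_mem_orbitClosure hy _) (fun r => shiftZ_mem_orbitClosure hy _) (fun t => ?_)
    (hα'.congr fun r => by rw [hg0, hKA]) (hβ'.congr fun r => by rw [hg0, hKB]))
  filter_upwards [eventually_ge_atTop t.natAbs] with r hr
  have ht : |t| ≤ r := by rw [Int.abs_eq_natAbs]; exact_mod_cast hr
  rw [hwin r _ t ht, hwin r _ t ht]

lemma exists_dvd_two_mul_sub [CompactSpace X] (hp : FastGrowing p)
    (hL : (omegaLimitSet x).Nontrivial) (hy : y ∈ orbitClosure (oxtoby p x))
    (hs : IsCompatible p s) (hph : ∀ i, IsPhase p x y i (s i)) {g : (ℤ → X) → ℤ → X}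
    (hg : ContinuousOn g (orbitClosure (oxtoby p x))) (hgy : ∀ k, g (shiftZ k y) = shiftZ (-k) y) :
    ∃ c, ∀ i, P p i ∣ 2 * s i - c := by
  obtain ⟨r, hr⟩ := exists_forall_filled_neg_two_mul_sub hp hL hy hs hph hg hgy
  refine (hs.const_mul 2).exists_dvd_sub_of_frequently_near hp (r := r + 1)
    (frequently_atTop.2 fun N => ?_)
  obtain ⟨v, hv, hav⟩ := exists_dvd_abs_sub_le_of_forall_filled hp (l := N + r) (r := r)
    (by have := lt_P hp (N + r); push_cast at this; omega) (hr (N + r + 1))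
  refine ⟨N + r + 1, by omega, Int.emod_le_or_neg_emod_le_of_dvd_sub (P_pos hp _)
    (d := 2 * s (N + r + 1) + v) (by simpa using hv.neg_right) ?_⟩
  rwa [← abs_neg, neg_add', sub_eq_add_neg]

lemma exists_dvd_sub_of_dvd_two_mul_sub (hp : FastGrowing p) (hL : (omegaLimitSet x).Nontrivial)
    (hT : IsToeplitz y) (hs : IsCompatible p s) (hph : ∀ i, IsPhase p x y i (s i)) {c : ℤ}
    (hc : ∀ i, P p i ∣ 2 * s i - c) : ∃ m, ∀ i, P p i ∣ s i - m := by
  by_cases hnear : ∃ᶠ i in atTop, s i % P p i ≤ |c| ∨ -s i % P p i ≤ |c|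
  · exact hs.exists_dvd_sub_of_frequently_near hp hnear
  obtain ⟨N, hN⟩ := eventually_atTop.1 (not_frequently.1 hnear)
  have hmid : ∀ i ≥ N, 2 * (s i % P p i) = c + P p i := fun i hi => by
    obtain ⟨h1, h2⟩ := not_or.1 (hN i hi)
    exact Int.two_mul_emod_eq_add_of_lt (P_pos hp i) (hc i) (lt_of_not_ge h1) (lt_of_not_ge h2)
  obtain ⟨i, hi⟩ := exists_filled_sub_of_isToeplitz hp hL hT hs hph (E p N + s N % P p N - P p N)
  exact (not_filled_sub_of_middle hp hs hmid i hi).elim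

end Sequence

end Oxtoby

open Oxtoby in
/-- Theorem `MT1'`: suppose `L((x_i))` has at least two points and `x` is a
Toeplitz sequence in the Oxtoby system of `z`. Then `x` is a shift of `z` iff there is a
self-conjugacy of the system sending `x` to its reverse `x⁻¹`. -/
theorem oxtoby_shift_iff_reverse_conjugate {X : Type*} [MetricSpace X] [CompactSpace X]
    (x : ℕ → X) (p : ℕ → ℕ) (hp : FastGrowing p)
    (hL : (omegaLimitSet x).Nontrivial)
    (y : ℤ → X) (hy : y ∈ orbitClosure (oxtoby p x)) (hT : IsToeplitz y) :
    (∃ m : ℤ, y = shiftZ m (oxtoby p x)) ↔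
      ∃ f : (ℤ → X) → (ℤ → X),
        IsConjugacy (orbitClosure (oxtoby p x)) (orbitClosure (oxtoby p x)) f ∧
        f y = revSeq y := by
  constructor
  · rintro ⟨m, rfl⟩
    exact ⟨_, isConjugacy_shiftZ _ _, shiftZ_shiftZ_oxtoby_eq_revSeq hp x m⟩
  · rintro ⟨f, hf, hfy⟩
    obtain ⟨g, hg, hgy⟩ := exists_continuousOn_shiftZ_neg hy hf hfy
    obtain ⟨s, hs, hph⟩ := exists_isCompatible_isPhase hp hy
    obtain ⟨c, hc⟩ := exists_dvd_two_mul_sub hp hL hy hs hph hg hgy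
    obtain ⟨m, hm⟩ := exists_dvd_sub_of_dvd_two_mul_sub hp hL hT hs hph hc
    exact ⟨-m, eq_shiftZ_of_dvd_sub hp hph hm⟩
end

section
/- Let X be a compact metric space, (x_i) a sequence of points of X, (p_i) a fast growing sequence, and z = z((p_i),(x_i)) the Oxtoby sequence. Set q_0 = 0 and q_i = p_1 + p_2 + ⋯ + p_i for i ≥ 1. Then for every m ≥ 1 and every maximal p_m-periodic block [n_0, n_1] in z: (1) if there is k ∈ ℤ with k p_m ∈ [n_0, n_1], then [n_0, n_1] = [k p_m − q_{m−1} − 1, k p_m + q_{m−1}]; (2) if k p_m ∉ [n_0, n_1] for every k ∈ ℤ, then [n_0, n_1] is a maximal p_{m−1}-periodic block in z. -/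
open Filter Topology

section OxAux

variable {X : Type*}

lemma ox_pos {p : ℕ → ℕ} (hp : FastGrowing p) : ∀ i, 0 < p i := by
  intro i
  induction i with
  | zero => simp [hp.1]
  | succ i ih => have := hp.2.2.2 i; omega

lemma ox_dvd_le {p : ℕ → ℕ} (hp : FastGrowing p) {i j : ℕ} (h : i ≤ j) : p i ∣ p j := by
  induction j with
  | zero => simpa [Nat.le_zero.mp h] using dvd_refl (p 0)
  | succ j ih =>
    rcases Nat.lt_or_ge i (j+1) with h' | h'
    · exact (ih (by omega)).trans (hp.2.1 j)
    · have : i = j + 1 := by omega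
      simp [this]

lemma ox_ratio {p : ℕ → ℕ} (hp : FastGrowing p) (i : ℕ) :
    (p i : ℤ) * ((p (i+1) / p i : ℕ) : ℤ) = (p (i+1) : ℤ) := by
  have := Nat.mul_div_cancel' (hp.2.1 i)
  exact_mod_cast congrArg (Nat.cast : ℕ → ℤ) this

lemma ox_r3 {p : ℕ → ℕ} (hp : FastGrowing p) (i : ℕ) : 3 ≤ p (i+1) / p i := by
  have hpos := ox_pos hp i
  rw [Nat.le_div_iff_mul_le hpos]
  have := hp.2.2.2 i
  omega

lemma mem_oxD_succ {p : ℕ → ℕ} {i : ℕ} {n : ℤ} :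
    n ∈ oxDefined p (i+1) ↔ n ∈ oxDefined p i ∨
      ∃ k : ℤ, (((p (i + 1) / p i : ℕ) : ℤ) ∣ k ∨ ((p (i + 1) / p i : ℕ) : ℤ) ∣ (k + 1)) ∧
        k * (p i : ℤ) ≤ n ∧ n < (k + 1) * (p i : ℤ) ∧ n ∉ oxDefined p i := by
  rfl

lemma oxD_mono {p : ℕ → ℕ} : ∀ {i j : ℕ}, i ≤ j → oxDefined p i ⊆ oxDefined p j := by
  intro i j h
  induction j with
  | zero => simp_all
  | succ j ih =>
    rcases Nat.lt_or_ge i (j+1) with h' | h'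
    · exact (ih (by omega)).trans (Set.subset_union_left)
    · have : i = j + 1 := by omega
      simp [this]

lemma blk_eq {P k k' n : ℤ} (hP : 0 < P) (h1 : k * P ≤ n) (h2 : n < (k+1) * P)
    (h1' : k' * P ≤ n) (h2' : n < (k'+1) * P) : k = k' := by
  have a1 : k < k' + 1 := lt_of_mul_lt_mul_right (lt_of_le_of_lt h1 h2') hP.le
  have a2 : k' < k + 1 := lt_of_mul_lt_mul_right (lt_of_le_of_lt h1' h2) hP.le
  omega

lemma oxD_class {p : ℕ → ℕ} (hp : FastGrowing p) :
    ∀ (i : ℕ) {n n' : ℤ}, (p i : ℤ) ∣ (n' - n) → n ∈ oxDefined p i → n' ∈ oxDefined p i := by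
  intro i
  induction i with
  | zero => intro n n' _ h; simp [oxDefined] at h
  | succ i ih =>
    intro n n' hdvd hn
    have hdvd' : (p i : ℤ) ∣ (n' - n) := by
      exact dvd_trans (by exact_mod_cast hp.2.1 i) hdvd
    rcases mem_oxD_succ.mp hn with h | ⟨k, hk, h1, h2, hni⟩
    · exact oxD_mono (le_refl _) (mem_oxD_succ.mpr (Or.inl (ih hdvd' h)))
    · obtain ⟨c, hc⟩ := hdvd
      set r : ℤ := ((p (i+1) / p i : ℕ) : ℤ) with hr
      have hratio : (p i : ℤ) * r = (p (i+1) : ℤ) := ox_ratio hp i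
      refine mem_oxD_succ.mpr (Or.inr ⟨k + c * r, ?_, ?_, ?_, ?_⟩)
      · rcases hk with hk | hk
        · exact Or.inl (dvd_add hk ⟨c, by ring⟩)
        · refine Or.inr ?_
          have he : k + c * r + 1 = (k + 1) + c * r := by ring
          rw [he]; exact dvd_add hk ⟨c, by ring⟩
      · have : (k + c * r) * (p i : ℤ) = k * p i + c * (p (i+1) : ℤ) := by
          rw [← hratio]; ring
        rw [this]
        have : n' = n + (p (i+1) : ℤ) * c := by omega
        rw [this]; linarith [h1]
      · have he : (k + c * r + 1) * (p i : ℤ) = (k + 1) * p i + c * (p (i+1) : ℤ) := by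
          rw [← hratio]; ring
        rw [he]
        have : n' = n + (p (i+1) : ℤ) * c := by omega
        rw [this]; linarith [h2]
      · intro hcon
        refine hni (ih ?_ hcon)
        have he : n - n' = -(n' - n) := by ring
        rw [he]; exact dvd_neg.mpr hdvd'

end OxAux

section OxAux2

variable {X : Type*}

lemma ox_unbounded {p : ℕ → ℕ} (hp : FastGrowing p) (N : ℕ) : ∃ i, N < p i := by
  have h : ∀ i, i + 1 ≤ p i := by
    intro i
    induction i with
    | zero => simp [hp.1]
    | succ i ih => have := hp.2.2.2 i; omega
  exact ⟨N, by have := h N; omega⟩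

lemma oxD_exists {p : ℕ → ℕ} (hp : FastGrowing p) (n : ℤ) : ∃ i, n ∈ oxDefined p i := by
  obtain ⟨i, hi⟩ := ox_unbounded hp n.natAbs
  have hpi : (0:ℤ) < (p i : ℤ) := by exact_mod_cast ox_pos hp i
  have habs : (n.natAbs : ℤ) < (p i : ℤ) := by exact_mod_cast hi
  refine ⟨i + 1, ?_⟩
  by_cases hd : n ∈ oxDefined p i
  · exact oxD_mono (Nat.le_succ i) hd
  · rcases le_or_gt 0 n with hn | hn
    · refine mem_oxD_succ.mpr (Or.inr ⟨0, Or.inl (dvd_zero _), ?_, ?_, hd⟩)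
      · simpa using hn
      · have : n = (n.natAbs : ℤ) := by omega
        simpa using lt_of_le_of_lt (le_of_eq this) (by simpa using habs)
    · refine mem_oxD_succ.mpr (Or.inr ⟨-1, Or.inr (by simp), ?_, ?_, hd⟩)
      · have he : (n.natAbs : ℤ) = -n := by omega
        have : -n < (p i : ℤ) := he ▸ habs
        linarith
      · have : ((-1:ℤ) + 1) * (p i : ℤ) = 0 := by ring
        omega

end OxAux2

section OxAux3

variable {X : Type*}

noncomputable def oxIdx (p : ℕ → ℕ) (n : ℤ) : ℕ := sInf {i : ℕ | n ∈ oxDefined p i}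

lemma oxtoby_eq (p : ℕ → ℕ) (x : ℕ → X) (n : ℤ) : oxtoby p x n = x (oxIdx p n) := rfl

lemma oxIdx_mem {p : ℕ → ℕ} (hp : FastGrowing p) (n : ℤ) : n ∈ oxDefined p (oxIdx p n) :=
  Nat.sInf_mem (oxD_exists hp n)

lemma oxIdx_le {p : ℕ → ℕ} {n : ℤ} {j : ℕ} (h : n ∈ oxDefined p j) : oxIdx p n ≤ j :=
  Nat.sInf_le h

lemma lt_oxIdx {p : ℕ → ℕ} (hp : FastGrowing p) {n : ℤ} {j : ℕ}
    (h : n ∉ oxDefined p j) : j < oxIdx p n := by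
  by_contra hc
  exact h (oxD_mono (by omega) (oxIdx_mem hp n))

lemma oxIdx_eq {p : ℕ → ℕ} (hp : FastGrowing p) {n : ℤ} {j : ℕ}
    (h1 : n ∈ oxDefined p (j+1)) (h2 : n ∉ oxDefined p j) : oxIdx p n = j + 1 := by
  have := oxIdx_le h1
  have := lt_oxIdx hp h2
  omega

/-- If `n ∈ D m` and `n' ≡ n (mod p m)` then they have the same first-fill index. -/
lemma oxIdx_congr {p : ℕ → ℕ} (hp : FastGrowing p) {m : ℕ} {n n' : ℤ}
    (hd : (p m : ℤ) ∣ n' - n) (hn : n ∈ oxDefined p m) : oxIdx p n' = oxIdx p n := by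
  have key : ∀ j, j ≤ m → (n ∈ oxDefined p j ↔ n' ∈ oxDefined p j) := by
    intro j hj
    have hdj : (p j : ℤ) ∣ n' - n := dvd_trans (by exact_mod_cast ox_dvd_le hp hj) hd
    constructor
    · exact oxD_class hp j hdj
    · intro h
      refine oxD_class hp j ?_ h
      have he : n - n' = -(n' - n) := by ring
      rw [he]; exact dvd_neg.mpr hdj
  have ha : oxIdx p n ≤ m := oxIdx_le hn
  have hn' : n' ∈ oxDefined p m := (key m le_rfl).mp hn
  have ha' : oxIdx p n' ≤ m := oxIdx_le hn'
  have h1 : oxIdx p n' ≤ oxIdx p n := oxIdx_le ((key _ ha).mp (oxIdx_mem hp n))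
  have h2 : oxIdx p n ≤ oxIdx p n' := oxIdx_le ((key _ ha').mpr (oxIdx_mem hp n'))
  omega

/-- `D m ⊆ Per_{p_m}(z)`. -/
lemma oxD_subset_per {p : ℕ → ℕ} (hp : FastGrowing p) (x : ℕ → X) (m : ℕ) :
    oxDefined p m ⊆ PerSet (p m) (oxtoby p x) := by
  intro n hn n' hd
  rw [oxtoby_eq, oxtoby_eq, oxIdx_congr hp hd hn]

/-- Undefined residue classes persist: if `n ∉ D m` then for every `j ≥ m` there is
`n' ≡ n (mod p m)` with `n' ∉ D j`. -/
lemma oxD_persist {p : ℕ → ℕ} (hp : FastGrowing p) {m : ℕ} {n : ℤ}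
    (hn : n ∉ oxDefined p m) : ∀ j, m ≤ j → ∃ n', (p m : ℤ) ∣ n' - n ∧ n' ∉ oxDefined p j := by
  intro j
  induction j with
  | zero =>
    intro h
    have h0 : m = 0 := by omega
    subst h0
    exact ⟨n, by simp, hn⟩
  | succ j ih =>
    intro hmj
    rcases Nat.lt_or_ge m (j+1) with h' | h'
    · obtain ⟨n', hd, hn'⟩ := ih (by omega)
      have hpj : (0:ℤ) < (p j : ℤ) := by exact_mod_cast ox_pos hp j
      -- move n' to a block with index ≡ 1 (mod r_j)
      set k₁ : ℤ := n' / (p j : ℤ) with hk₁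
      have hmod := Int.emod_emod_of_dvd n' (dvd_refl (p j : ℤ))
      have hdiv : (p j : ℤ) * k₁ + n' % (p j : ℤ) = n' := Int.mul_ediv_add_emod n' _
      have hmem0 : 0 ≤ n' % (p j : ℤ) := Int.emod_nonneg n' (by omega)
      have hmemlt : n' % (p j : ℤ) < (p j : ℤ) := Int.emod_lt_of_pos n' hpj
      set n'' : ℤ := n' % (p j : ℤ) + (p j : ℤ) with hn''
      have hdn : (p j : ℤ) ∣ n'' - n' := ⟨1 - k₁, by rw [hn'']; linear_combination hdiv⟩
      refine ⟨n'', ?_, ?_⟩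
      · have h1 : (p m : ℤ) ∣ n'' - n' :=
          dvd_trans (by exact_mod_cast ox_dvd_le hp (by omega : m ≤ j)) hdn
        have he : n'' - n = (n'' - n') + (n' - n) := by ring
        rw [he]; exact dvd_add h1 hd
      · intro hcon
        have hnotDj : n'' ∉ oxDefined p j := by
          intro hc
          refine hn' (oxD_class hp j ?_ hc)
          have he : n' - n'' = -(n'' - n') := by ring
          rw [he]; exact dvd_neg.mpr hdn
        rcases mem_oxD_succ.mp hcon with h | ⟨k, hk, hb1, hb2, _⟩
        · exact hnotDj h
        · have hkeq : k = 1 := by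
            refine blk_eq hpj hb1 hb2 ?_ ?_
            · rw [hn'']; omega
            · rw [hn'']
              have : ((1:ℤ)+1) * (p j : ℤ) = (p j : ℤ) + (p j : ℤ) := by ring
              omega
          have hr3 : (3:ℤ) ≤ ((p (j+1) / p j : ℕ) : ℤ) := by exact_mod_cast ox_r3 hp j
          rcases hk with hk | hk
          · rw [hkeq] at hk
            have := Int.le_of_dvd (by omega) hk
            omega
          · rw [hkeq] at hk
            have := Int.le_of_dvd (by omega) hk
            omega
    · have h0 : m = j + 1 := by omega
      subst h0
      exact ⟨n, by simp, hn⟩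

/-- If `n ∉ D m` then for every `c > m` there is `n' ≡ n (mod p m)` first filled at step `c`. -/
lemma oxD_level {p : ℕ → ℕ} (hp : FastGrowing p) {m : ℕ} {n : ℤ}
    (hn : n ∉ oxDefined p m) {c : ℕ} (hc : m < c) :
    ∃ n', (p m : ℤ) ∣ n' - n ∧ oxIdx p n' = c := by
  obtain ⟨c', rfl⟩ : ∃ c', c = c' + 1 := ⟨c - 1, by omega⟩
  obtain ⟨n₁, hd1, hn1⟩ := oxD_persist hp hn c' (by omega)
  have hpc : (0:ℤ) < (p c' : ℤ) := by exact_mod_cast ox_pos hp c'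
  set k₁ : ℤ := n₁ / (p c' : ℤ) with hk₁
  have hdiv : (p c' : ℤ) * k₁ + n₁ % (p c' : ℤ) = n₁ := Int.mul_ediv_add_emod n₁ _
  have hmem0 : 0 ≤ n₁ % (p c' : ℤ) := Int.emod_nonneg n₁ (by omega)
  have hmemlt : n₁ % (p c' : ℤ) < (p c' : ℤ) := Int.emod_lt_of_pos n₁ hpc
  set n' : ℤ := n₁ % (p c' : ℤ) with hn'
  have hdn : (p c' : ℤ) ∣ n' - n₁ := ⟨-k₁, by rw [hn']; linear_combination hdiv⟩
  have hnotDc : n' ∉ oxDefined p c' := by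
    intro hcon
    refine hn1 (oxD_class hp c' ?_ hcon)
    have he : n₁ - n' = -(n' - n₁) := by ring
    rw [he]; exact dvd_neg.mpr hdn
  have hmem : n' ∈ oxDefined p (c'+1) := by
    refine mem_oxD_succ.mpr (Or.inr ⟨0, Or.inl (dvd_zero _), ?_, ?_, hnotDc⟩)
    · simpa [hn'] using hmem0
    · simpa [hn'] using hmemlt
  refine ⟨n', ?_, oxIdx_eq hp hmem hnotDc⟩
  have h1 : (p m : ℤ) ∣ n' - n₁ :=
    dvd_trans (by exact_mod_cast ox_dvd_le hp (by omega : m ≤ c')) hdn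
  have he : n' - n = (n' - n₁) + (n₁ - n) := by ring
  rw [he]; exact dvd_add h1 hd1

end OxAux3

section OxAux4

variable {X : Type*}

lemma per_subset_oxD {p : ℕ → ℕ} (hp : FastGrowing p) (x : ℕ → X) {m a b : ℕ}
    (ha : m < a) (hb : m < b) (hab : x a ≠ x b) :
    PerSet (p m) (oxtoby p x) ⊆ oxDefined p m := by
  intro n hn
  by_contra hd
  by_cases hxa : x a = x (oxIdx p n)
  · obtain ⟨n', hdvd, hidx⟩ := oxD_level hp hd hb
    have h := hn n' hdvd
    rw [oxtoby_eq, oxtoby_eq, hidx] at h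
    exact hab (hxa.trans h.symm)
  · obtain ⟨n', hdvd, hidx⟩ := oxD_level hp hd ha
    have h := hn n' hdvd
    rw [oxtoby_eq, oxtoby_eq, hidx] at h
    exact hxa h

lemma per_univ {p : ℕ → ℕ} (hp : FastGrowing p) (x : ℕ → X) {m : ℕ}
    (htail : ∀ a, m < a → ∀ b, m < b → x a = x b) (n : ℤ) :
    n ∈ PerSet (p m) (oxtoby p x) := by
  intro n' hd
  by_cases hD : n ∈ oxDefined p m
  · exact oxD_subset_per hp x m hD n' hd
  · have hD' : n' ∉ oxDefined p m := by
      intro hc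
      refine hD (oxD_class hp m ?_ hc)
      have he : n - n' = -(n' - n) := by ring
      rw [he]; exact dvd_neg.mpr hd
    have h1 : m < oxIdx p n := lt_oxIdx hp hD
    have h2 : m < oxIdx p n' := lt_oxIdx hp hD'
    rw [oxtoby_eq, oxtoby_eq]
    exact htail _ h2 _ h1

end OxAux4

section OxAux5

lemma not_dvd_mul_add {P k s : ℤ} (h0 : 0 < s) (h1 : s < P) : ¬ P ∣ (k * P + s) := by
  intro hdvd
  have hs : P ∣ s := (dvd_add_right ⟨k, mul_comm k P⟩).mp hdvd
  have := Int.le_of_dvd h0 hs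
  omega

lemma not_dvd_mul_sub {P k s : ℤ} (h0 : 0 < s) (h1 : s < P) : ¬ P ∣ (k * P - s) := by
  intro hdvd
  have h2 : k * P - s = k * P + (-s) := by ring
  rw [h2] at hdvd
  have hs : P ∣ (-s) := (dvd_add_right ⟨k, mul_comm k P⟩).mp hdvd
  have := Int.le_of_dvd (by omega) (dvd_neg.mp hs)
  omega

lemma ox_q2 {p : ℕ → ℕ} (hp : FastGrowing p) (q : ℕ → ℕ) (hq0 : q 0 = 0)
    (hqs : ∀ i, q (i+1) = q i + p (i+1)) : ∀ m, q m + 2 ≤ p (m+1) := by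
  intro m
  induction m with
  | zero => have := hp.2.2.1; simp only [Nat.reduceAdd]; omega
  | succ m ih =>
    have h3 := hp.2.2.2 (m+1)
    have := hqs m
    omega

lemma ox_qp {p : ℕ → ℕ} (hp : FastGrowing p) (q : ℕ → ℕ) (hq0 : q 0 = 0)
    (hqs : ∀ i, q (i+1) = q i + p (i+1)) : ∀ m, p m ≤ q m + 1 := by
  intro m
  cases m with
  | zero => simp [hp.1, hq0]
  | succ m => have := hqs m; omega

lemma mem_oxD_one {p : ℕ → ℕ} (hp : FastGrowing p) {n : ℤ} :
    n ∈ oxDefined p 1 ↔ ((p 1 : ℤ) ∣ n ∨ (p 1 : ℤ) ∣ (n + 1)) := by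
  have hp0 : p 0 = 1 := hp.1
  rw [mem_oxD_succ]
  simp only [hp0, Nat.div_one, Nat.cast_one, oxDefined]
  constructor
  · rintro (h | ⟨k, hk, h1, h2, -⟩)
    · simp at h
    · have : k = n := by omega
      subst this
      exact hk
  · intro h
    exact Or.inr ⟨n, h, by omega, by omega, by simp⟩

lemma oxD_block {p : ℕ → ℕ} (hp : FastGrowing p) (q : ℕ → ℕ) (hq0 : q 0 = 0)
    (hqs : ∀ i, q (i+1) = q i + p (i+1)) :
    ∀ m : ℕ, ∀ k : ℤ,
      (∀ n : ℤ, k * (p (m+1) : ℤ) - (q m : ℤ) - 1 ≤ n → n ≤ k * (p (m+1) : ℤ) + (q m : ℤ) →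
        n ∈ oxDefined p (m+1)) ∧
      (k * (p (m+1) : ℤ) + (q m : ℤ) + 1) ∉ oxDefined p (m+1) ∧
      (k * (p (m+1) : ℤ) - (q m : ℤ) - 2) ∉ oxDefined p (m+1) := by
  intro m
  induction m with
  | zero =>
    intro k
    simp only [Nat.reduceAdd]
    have hq0' : ((q 0 : ℕ) : ℤ) = 0 := by exact_mod_cast hq0
    have hp1 : (3 : ℤ) ≤ (p 1 : ℤ) := by exact_mod_cast hp.2.2.1
    refine ⟨?_, ?_, ?_⟩
    · intro n h1 h2
      rw [hq0'] at h1 h2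
      rw [mem_oxD_one hp]
      rcases (by omega : n = k * (p 1 : ℤ) ∨ n = k * (p 1 : ℤ) - 1) with h | h
      · subst h
        exact Or.inl ⟨k, mul_comm _ _⟩
      · subst h
        exact Or.inr ⟨k, by ring⟩
    · rw [hq0', mem_oxD_one hp]
      push_neg
      constructor
      · simpa using not_dvd_mul_add (P := (p 1 : ℤ)) (k := k) (by omega : (0:ℤ) < 1) (by omega)
      · have he : k * (p 1 : ℤ) + 0 + 1 + 1 = k * (p 1:ℤ) + 2 := by ring
        rw [he]
        exact not_dvd_mul_add (by omega : (0:ℤ) < 2) (by omega)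
    · rw [hq0', mem_oxD_one hp]
      push_neg
      constructor
      · have he : k * (p 1 : ℤ) - 0 - 2 = k * (p 1:ℤ) - 2 := by ring
        rw [he]
        exact not_dvd_mul_sub (by omega : (0:ℤ) < 2) (by omega)
      · have he : k * (p 1 : ℤ) - 0 - 2 + 1 = k * (p 1:ℤ) - 1 := by ring
        rw [he]
        exact not_dvd_mul_sub (by omega : (0:ℤ) < 1) (by omega)
  | succ m ih =>
    intro k
    have hratio : (p (m+1) : ℤ) * ((p (m+1+1) / p (m+1) : ℕ) : ℤ) = (p (m+1+1) : ℤ) :=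
      ox_ratio hp (m+1)
    have hr3 : (3:ℤ) ≤ ((p (m+1+1) / p (m+1) : ℕ) : ℤ) := by exact_mod_cast ox_r3 hp (m+1)
    have hQ1 : ((q (m+1) : ℕ) : ℤ) = (q m : ℤ) + (p (m+1) : ℤ) := by
      rw [hqs m]; push_cast; ring
    have hQ2 : (q m : ℤ) + 2 ≤ (p (m+1) : ℤ) := by exact_mod_cast ox_q2 hp q hq0 hqs m
    have hQ0 : (0:ℤ) ≤ (q m : ℤ) := by positivity
    have hP1pos : (0:ℤ) < (p (m+1) : ℤ) := by exact_mod_cast ox_pos hp (m+1)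
    set P1 : ℤ := (p (m+1) : ℤ) with hP1
    set P2 : ℤ := (p (m+1+1) : ℤ) with hP2
    set Q : ℤ := (q m : ℤ) with hQ
    set r : ℤ := ((p (m+1+1) / p (m+1) : ℕ) : ℤ) with hr
    have hk2 : (k * r) * P1 = k * P2 := by rw [← hratio]; ring
    refine ⟨?_, ?_, ?_⟩
    · intro n h1 h2
      rw [hQ1] at h1 h2
      by_cases hn1 : n < k * P2 - P1
      · -- use ih for k*r - 1
        refine oxD_mono (Nat.le_succ (m+1)) ((ih (k*r - 1)).1 n ?_ ?_)
        · have he : (k*r - 1) * P1 = k * P2 - P1 := by rw [← hratio]; ring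
          rw [he]; omega
        · have he : (k*r - 1) * P1 = k * P2 - P1 := by rw [← hratio]; ring
          rw [he]; omega
      · by_cases hn2 : k * P2 + P1 ≤ n
        · refine oxD_mono (Nat.le_succ (m+1)) ((ih (k*r + 1)).1 n ?_ ?_)
          · have he : (k*r + 1) * P1 = k * P2 + P1 := by rw [← hratio]; ring
            rw [he]; omega
          · have he : (k*r + 1) * P1 = k * P2 + P1 := by rw [← hratio]; ring
            rw [he]; omega
        · -- middle zone
          by_cases hD : n ∈ oxDefined p (m+1)
          · exact oxD_mono (Nat.le_succ (m+1)) hD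
          · rcases le_or_gt (k * P2) n with hmid | hmid
            · exact mem_oxD_succ.mpr (Or.inr ⟨k*r, Or.inl ⟨k, mul_comm _ _⟩,
                by rw [hk2]; exact hmid,
                by have he : (k*r + 1) * P1 = k * P2 + P1 := by rw [← hratio]; ring
                   rw [he]; omega, hD⟩)
            · refine mem_oxD_succ.mpr (Or.inr ⟨k*r - 1, Or.inr (by
                have he : k*r - 1 + 1 = k * r := by ring
                rw [he]; exact ⟨k, mul_comm _ _⟩), ?_, ?_, hD⟩)
              · have he : (k*r - 1) * P1 = k * P2 - P1 := by rw [← hratio]; ring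
                rw [he]; omega
              · have he : (k*r - 1 + 1) * P1 = k * P2 := by rw [← hratio]; ring
                rw [he]; exact hmid
    · rw [hQ1]
      intro hcon
      rcases mem_oxD_succ.mp hcon with h | ⟨k', hk', hb1, hb2, -⟩
      · refine (ih (k*r + 1)).2.1 ?_
        have he : (k*r + 1) * P1 + Q + 1 = k * P2 + (Q + P1) + 1 := by rw [← hratio]; ring
        rw [he]; exact h
      · have hkeq : k' = k*r + 1 := by
          refine blk_eq hP1pos hb1 hb2 ?_ ?_
          · have he : (k*r + 1) * P1 = k * P2 + P1 := by rw [← hratio]; ring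
            rw [he]; omega
          · have he : (k*r + 1 + 1) * P1 = k * P2 + P1 + P1 := by rw [← hratio]; ring
            rw [he]; omega
        subst hkeq
        rcases hk' with hk' | hk'
        · exact not_dvd_mul_add (by omega : (0:ℤ) < 1) (by omega) hk'
        · have he : k * r + 1 + 1 = k * r + 2 := by ring
          rw [he] at hk'
          exact not_dvd_mul_add (by omega : (0:ℤ) < 2) (by omega) hk'
    · rw [hQ1]
      intro hcon
      rcases mem_oxD_succ.mp hcon with h | ⟨k', hk', hb1, hb2, -⟩
      · refine (ih (k*r - 1)).2.2 ?_
        have he : (k*r - 1) * P1 - Q - 2 = k * P2 - (Q + P1) - 2 := by rw [← hratio]; ring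
        rw [he]; exact h
      · have hkeq : k' = k*r - 2 := by
          refine blk_eq hP1pos hb1 hb2 ?_ ?_
          · have he : (k*r - 2) * P1 = k * P2 - P1 - P1 := by rw [← hratio]; ring
            rw [he]; omega
          · have he : (k*r - 2 + 1) * P1 = k * P2 - P1 := by rw [← hratio]; ring
            rw [he]; omega
        subst hkeq
        rcases hk' with hk' | hk'
        · exact not_dvd_mul_sub (by omega : (0:ℤ) < 2) (by omega) hk'
        · have he : k * r - 2 + 1 = k * r - 1 := by ring
          rw [he] at hk'
          exact not_dvd_mul_sub (by omega : (0:ℤ) < 1) (by omega) hk'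

lemma oxD_near {p : ℕ → ℕ} (hp : FastGrowing p) (q : ℕ → ℕ) (hq0 : q 0 = 0)
    (hqs : ∀ i, q (i+1) = q i + p (i+1)) {m : ℕ} {n : ℤ}
    (h1 : n ∈ oxDefined p (m+1)) (h2 : n ∉ oxDefined p m) :
    ∃ k : ℤ, k * (p (m+1) : ℤ) - (q m : ℤ) - 1 ≤ n ∧ n ≤ k * (p (m+1) : ℤ) + (q m : ℤ) := by
  rcases mem_oxD_succ.mp h1 with h | ⟨k', hk', hb1, hb2, -⟩
  · exact absurd h h2
  · have hratio : (p m : ℤ) * ((p (m+1) / p m : ℕ) : ℤ) = (p (m+1) : ℤ) := ox_ratio hp m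
    have hqp : (p m : ℤ) ≤ (q m : ℤ) + 1 := by exact_mod_cast ox_qp hp q hq0 hqs m
    have hQ0 : (0:ℤ) ≤ (q m : ℤ) := by positivity
    rcases hk' with ⟨t, ht⟩ | ⟨t, ht⟩
    · refine ⟨t, ?_, ?_⟩
      · have he : t * (p (m+1) : ℤ) = k' * (p m : ℤ) := by
          rw [← hratio, ht]; ring
        rw [he] at *; omega
      · have he : t * (p (m+1) : ℤ) = k' * (p m : ℤ) := by
          rw [← hratio, ht]; ring
        have he2 : (k' + 1) * (p m : ℤ) = k' * (p m : ℤ) + (p m : ℤ) := by ring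
        rw [he2] at hb2
        omega
    · refine ⟨t, ?_, ?_⟩
      · have he : t * (p (m+1) : ℤ) = (k' + 1) * (p m : ℤ) := by
          rw [← hratio, ht]; ring
        have he2 : (k' + 1) * (p m : ℤ) = k' * (p m : ℤ) + (p m : ℤ) := by ring
        rw [he, he2]
        omega
      · have he : t * (p (m+1) : ℤ) = (k' + 1) * (p m : ℤ) := by
          rw [← hratio, ht]; ring
        rw [he]
        omega

end OxAux5
/-- Lemma 6.1: with `q_0 = 0` and `q_i = p_1 + ⋯ + p_i`, every maximal
`p_m`-periodic block `[n_0,n_1]` in the Oxtoby sequence `z` (`m ≥ 1`) either contains some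
`k p_m` and then equals `[k p_m - q_{m-1} - 1, k p_m + q_{m-1}]`, or contains no multiple
of `p_m` and is a maximal `p_{m-1}`-periodic block in `z`. -/
theorem oxtoby_maximal_blocks {X : Type*} [MetricSpace X] [CompactSpace X]
    (x : ℕ → X) (p : ℕ → ℕ) (hp : FastGrowing p)
    (q : ℕ → ℕ) (hq : ∀ i, q i = ∑ j ∈ Finset.Icc 1 i, p j)
    (m : ℕ) (hm : 1 ≤ m) (n0 n1 : ℤ)
    (hblock : IsMaxPeriodicBlock (p m) (oxtoby p x) n0 n1) :
    (∀ k : ℤ, k * (p m : ℤ) ∈ Set.Icc n0 n1 →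
      n0 = k * (p m : ℤ) - (q (m - 1) : ℤ) - 1 ∧
        n1 = k * (p m : ℤ) + (q (m - 1) : ℤ)) ∧
    ((∀ k : ℤ, k * (p m : ℤ) ∉ Set.Icc n0 n1) →
      IsMaxPeriodicBlock (p (m - 1)) (oxtoby p x) n0 n1) := by
  have hq0 : q 0 = 0 := by rw [hq]; simp
  have hqs : ∀ i, q (i+1) = q i + p (i+1) := by
    intro i
    rw [hq, hq, Finset.sum_Icc_succ_top (by omega : 1 ≤ i+1)]
  obtain ⟨m', rfl⟩ : ∃ m', m = m' + 1 := ⟨m - 1, by omega⟩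
  simp only [Nat.add_sub_cancel]
  obtain ⟨h01, hsub, hmax⟩ := hblock
  by_cases htail : ∀ a, m' + 1 < a → ∀ b, m' + 1 < b → x a = x b
  · exfalso
    have hall := per_univ hp x htail
    have := hmax (n0 - 1) n1 (by omega) le_rfl (fun t _ => hall t)
    omega
  · push_neg at htail
    obtain ⟨a, ha, b, hb, hab⟩ := htail
    have hPD : PerSet (p (m'+1)) (oxtoby p x) = oxDefined p (m'+1) :=
      le_antisymm (per_subset_oxD hp x ha hb hab) (oxD_subset_per hp x _)
    have hPD' : PerSet (p m') (oxtoby p x) = oxDefined p m' :=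
      le_antisymm (per_subset_oxD hp x (by omega) (by omega) hab) (oxD_subset_per hp x _)
    have hsubD : Set.Icc n0 n1 ⊆ oxDefined p (m'+1) := hPD ▸ hsub
    have hQ0 : (0:ℤ) ≤ (q m' : ℤ) := by positivity
    constructor
    · intro k hk
      simp only [Set.mem_Icc] at hk
      obtain ⟨hA, hB1, hB2⟩ := oxD_block hp q hq0 hqs m' k
      have hcov : Set.Icc (min n0 (k * (p (m'+1):ℤ) - (q m' : ℤ) - 1))
          (max n1 (k * (p (m'+1):ℤ) + (q m' : ℤ))) ⊆ PerSet (p (m'+1)) (oxtoby p x) := by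
        intro t ht
        simp only [Set.mem_Icc] at ht
        by_cases hc : n0 ≤ t ∧ t ≤ n1
        · exact hsub (Set.mem_Icc.mpr hc)
        · rw [hPD]
          refine hA t ?_ ?_ <;> omega
      obtain ⟨hmin, hmaxx⟩ := hmax _ _ (min_le_left _ _) (le_max_left _ _) hcov
      have hR : n1 = k * (p (m'+1):ℤ) + (q m' : ℤ) := by
        by_contra hne
        have hlt : k * (p (m'+1):ℤ) + (q m' : ℤ) < n1 := by omega
        exact hB1 (hsubD (Set.mem_Icc.mpr ⟨by omega, by omega⟩))
      have hL : n0 = k * (p (m'+1):ℤ) - (q m' : ℤ) - 1 := by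
        by_contra hne
        have hlt : n0 < k * (p (m'+1):ℤ) - (q m' : ℤ) - 1 := by omega
        exact hB2 (hsubD (Set.mem_Icc.mpr ⟨by omega, by omega⟩))
      exact ⟨hL, hR⟩
    · intro hnk
      have hsubD' : Set.Icc n0 n1 ⊆ oxDefined p m' := by
        intro t ht
        simp only [Set.mem_Icc] at ht
        by_contra hD
        have htD : t ∈ oxDefined p (m'+1) := hsubD (Set.mem_Icc.mpr ht)
        obtain ⟨k, hk1, hk2⟩ := oxD_near hp q hq0 hqs htD hD
        obtain ⟨hA, hB1, hB2⟩ := oxD_block hp q hq0 hqs m' k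
        have hcov : Set.Icc (min n0 (k * (p (m'+1):ℤ) - (q m' : ℤ) - 1))
            (max n1 (k * (p (m'+1):ℤ) + (q m' : ℤ))) ⊆ PerSet (p (m'+1)) (oxtoby p x) := by
          intro t' ht'
          simp only [Set.mem_Icc] at ht'
          by_cases hc : n0 ≤ t' ∧ t' ≤ n1
          · exact hsub (Set.mem_Icc.mpr hc)
          · rw [hPD]
            refine hA t' ?_ ?_ <;> omega
        obtain ⟨hmin, hmaxx⟩ := hmax _ _ (min_le_left _ _) (le_max_left _ _) hcov
        exact hnk k (Set.mem_Icc.mpr ⟨by omega, by omega⟩)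
      refine ⟨h01, fun t ht => oxD_subset_per hp x m' (hsubD' ht), ?_⟩
      intro n0' n1' h0' h1' hsub'
      refine hmax n0' n1' h0' h1' ?_
      intro t ht
      have htD : t ∈ oxDefined p m' := hPD' ▸ hsub' ht
      exact oxD_subset_per hp x (m'+1) (oxD_mono (Nat.le_succ m') htD)
end
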